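/- Let M be a finite monoid. For an idempotent e ∈ M, let M_e be the submonoid of M generated by the set {m ∈ M : e ∈ M·m·M}, i.e., by those m such that a·m·b = e for some a, b ∈ M. Then M satisfies (xyz)^ω·y·(xyz)^ω = (xyz)^ω for all x, y, z ∈ M if and only if for every idempotent e ∈ M and every s ∈ M_e, e·s·e = e. -/
import Mathlib


/-- The ω-power of an element of a finite monoid: `m ^ (card M)!`, which is
the unique idempotent among the positive powers of `m`. -/
def omegaPow {M : Type} [Monoid M] [Fintype M] (m : M) : M :=
  m ^ (Fintype.card M).factorial

private lemma omegaPow_aux {M : Type} [Monoid M] [Fintype M] (m : M) (a b : ℕ)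
    (hab : a < b) (hb : b ≤ Fintype.card M) (h : m ^ a = m ^ b) :
    omegaPow m * omegaPow m = omegaPow m := by
  set p : ℕ := b - a with hp
  have hp0 : 0 < p := by omega
  have hper : ∀ n, a ≤ n → m ^ (n + p) = m ^ n := by
    intro n hn
    have h1 : n + p = b + (n - a) := by omega
    have h2 : n = a + (n - a) := by omega
    rw [h1, pow_add, ← h, ← pow_add, ← h2]
  have hper2 : ∀ c n, a ≤ n → m ^ (n + c * p) = m ^ n := by
    intro c
    induction c with
    | zero => simp
    | succ c ih =>
      intro n hn
      have h1 : n + (c + 1) * p = (n + c * p) + p := by ring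
      rw [h1, hper _ (by omega), ih n hn]
  obtain ⟨c, hc⟩ : p ∣ (Fintype.card M).factorial :=
    Nat.dvd_factorial hp0 (by omega)
  have ha : a ≤ (Fintype.card M).factorial :=
    le_trans (by omega) (Nat.self_le_factorial _)
  show m ^ (Fintype.card M).factorial * m ^ (Fintype.card M).factorial
      = m ^ (Fintype.card M).factorial
  rw [← pow_add]
  calc m ^ ((Fintype.card M).factorial + (Fintype.card M).factorial)
      = m ^ ((Fintype.card M).factorial + c * p) := by rw [hc]; ring_nf
    _ = m ^ (Fintype.card M).factorial := hper2 c _ ha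

/-- The ω-power is idempotent. -/
lemma omegaPow_idem {M : Type} [Monoid M] [Fintype M] (m : M) :
    omegaPow m * omegaPow m = omegaPow m := by
  classical
  obtain ⟨i, j, hne, hij⟩ := Fintype.exists_ne_map_eq_of_card_lt
    (fun k : Fin (Fintype.card M + 1) => m ^ (k : ℕ)) (by simp)
  have hvalne : (i : ℕ) ≠ (j : ℕ) := fun h => hne (Fin.ext h)
  rcases Nat.lt_or_ge (i : ℕ) (j : ℕ) with hlt | hge
  · exact omegaPow_aux m i j hlt (by omega) hij
  · have hlt : (j : ℕ) < (i : ℕ) := by omega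
    exact omegaPow_aux m j i hlt (by omega) hij.symm

/-- The ω-power of an idempotent is itself. -/
lemma omegaPow_of_idem {M : Type} [Monoid M] [Fintype M] {e : M} (he : e * e = e) :
    omegaPow e = e := by
  have h1 : (Fintype.card M).factorial = ((Fintype.card M).factorial - 1) + 1 := by
    have := Nat.factorial_pos (Fintype.card M); omega
  show e ^ (Fintype.card M).factorial = e
  rw [h1]
  exact IsIdempotentElem.pow_succ_eq _ he

/-- A finite monoid satisfies `(xyz)^ω·y·(xyz)^ω = (xyz)^ω` iff for every
idempotent `e`, `e·s·e = e` for every `s` in the submonoid `M_e` generated by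
`{m : e ∈ M·m·M}`. -/
theorem DA_iff_local_condition (M : Type) [Monoid M] [Fintype M] :
    (∀ x y z : M,
        omegaPow (x * y * z) * y * omegaPow (x * y * z) = omegaPow (x * y * z)) ↔
      ∀ e : M, e * e = e →
        ∀ s ∈ Submonoid.closure {m : M | ∃ a b : M, a * m * b = e}, e * s * e = e := by
  constructor
  · intro hDA e he s hs
    -- Lemma A : anything J-above e is sandwiched by e.
    have lemA : ∀ m a b : M, a * m * b = e → e * m * e = e := by
      intro m a b hab
      have h1 : (e * a) * m * (b * e) = e := by
        have h2 : (e * a) * m * (b * e) = e * (a * m * b) * e := by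
          simp [mul_assoc]
        rw [h2, hab, he, he]
      have hda := hDA (e * a) m (b * e)
      rwa [h1, omegaPow_of_idem he] at hda
    -- Lemma C : multiplicativity.
    have lemC : ∀ s t : M, e * s * e = e → e * t * e = e → e * (s * t) * e = e := by
      intro s t hs ht
      set d : M := t * e * s with hd_def
      have hs' : e * (s * e) = e := by rw [← mul_assoc]; exact hs
      have ht' : e * (t * e) = e := by rw [← mul_assoc]; exact ht
      have hd : e * d * e = e := by
        show e * (t * e * s) * e = e
        have : e * (t * e * s) * e = (e * (t * e)) * (s * e) := by simp [mul_assoc]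
        rw [this, ht', ← mul_assoc, hs]
      have hd' : e * (d * e) = e := by rw [← mul_assoc]; exact hd
      have hde : (d * e) * (d * e) = d * e := by
        have : (d * e) * (d * e) = d * (e * (d * e)) := by simp [mul_assoc]
        rw [this, hd']
      have h := hDA 1 d e
      rw [one_mul] at h
      rw [omegaPow_of_idem hde] at h
      -- h : d * e * d * (d * e) = d * e
      have h2 : e * (d * (e * (d * (d * e)))) = e := by
        have h2a : e * (d * (e * (d * (d * e)))) = e * (d * e * d * (d * e)) := by
          simp [mul_assoc]
        rw [h2a, h, hd']
      have h3 : e * (d * (d * e)) = e := by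
        have key : (e * d * e) * (d * (d * e)) = e := by
          have : (e * d * e) * (d * (d * e)) = e * (d * (e * (d * (d * e)))) := by
            simp [mul_assoc]
          rw [this]; exact h2
        calc e * (d * (d * e)) = (e * d * e) * (d * (d * e)) := by rw [hd]
          _ = e := key
      -- expand d in h3
      rw [hd_def] at h3
      have h4 : e * (t * (e * (s * (t * (e * (s * e)))))) = e := by
        have : e * (t * (e * (s * (t * (e * (s * e))))))
            = e * (t * e * s * (t * e * s * e)) := by simp [mul_assoc]
        rw [this]; exact h3
      rw [hs'] at h4
      -- h4 : e * (t * (e * (s * (t * e)))) = e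
      have key2 : (e * t * e) * (s * (t * e)) = e := by
        have : (e * t * e) * (s * (t * e)) = e * (t * (e * (s * (t * e)))) := by
          simp [mul_assoc]
        rw [this]; exact h4
      calc e * (s * t) * e = e * (s * (t * e)) := by simp [mul_assoc]
        _ = (e * t * e) * (s * (t * e)) := by rw [ht]
        _ = e := key2
    induction hs using Submonoid.closure_induction with
    | mem m hm =>
      obtain ⟨a, b, hab⟩ := hm
      exact lemA m a b hab
    | one => rw [mul_one]; exact he
    | mul a b ha hb iha ihb =>
      exact lemC a b iha ihb
  · intro h x y z
    set e : M := omegaPow (x * y * z) with he_def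
    have he : e * e = e := omegaPow_idem _
    have hN : (Fintype.card M).factorial = ((Fintype.card M).factorial - 1) + 1 := by
      have := Nat.factorial_pos (Fintype.card M); omega
    have hy : ∃ a b : M, a * y * b = e := by
      refine ⟨e * x, z * (x * y * z) ^ ((Fintype.card M).factorial - 1), ?_⟩
      have : (e * x) * y * (z * (x * y * z) ^ ((Fintype.card M).factorial - 1))
          = e * ((x * y * z) * (x * y * z) ^ ((Fintype.card M).factorial - 1)) := by
        simp [mul_assoc]
      rw [this, ← pow_succ', ← hN]
      show e * omegaPow (x * y * z) = e
      rw [← he_def, he]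
    exact h e he y (Submonoid.subset_closure hy)
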